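/- Let K be a combinatorial d-manifold and let G be a group of automorphisms of the abstract simplicial complex K_a corresponding to K. If G acts properly on K_a (i.e., for every vertex u of K_a and every non-identity element g of G, the distance between u and g(u) in the edge-graph of K_a is at least 3), then the geometric realization of the quotient complex K_a/G is again a combinatorial d-manifold. -/

import Mathlib

open Geometry

namespace MinTri

/-- The ambient Euclidean space `ℝ^N`. -/
abbrev Spc (N : ℕ) : Type := Fin N → ℝ

variable {m n N : ℕ}

/-- `fcount K i` is the number `f_i(K)` of `i`-dimensional simplices of `K`. -/
noncomputable def fcount (K : SimplicialComplex ℝ (Spc N)) (i : ℕ) : ℕ :=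
  {s ∈ K.faces | s.card = i + 1}.ncard

/-- The Euler characteristic `χ(K) = ∑_{i=0}^{d} (-1)^i f_i(K)` of a `d`-dimensional complex. -/
noncomputable def eulerChar (K : SimplicialComplex ℝ (Spc N)) (d : ℕ) : ℤ :=
  ∑ i ∈ Finset.range (d + 1), (-1 : ℤ) ^ i * fcount K i

/-- `f_{i-1}(K)` with the convention `f_{-1} = 1` (so `fcount' K 0 = 1`). -/
noncomputable def fcount' (K : SimplicialComplex ℝ (Spc N)) (i : ℕ) : ℤ :=
  if i = 0 then 1 else (fcount K (i - 1) : ℤ)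

/-- The `h`-vector: `h_j(K) = ∑_{i=-1}^{j-1} (-1)^{j-i-1} C(d-i, j-i-1) f_i(K)`,
reindexed as a sum over `i` from `0` to `j` with `fcount'` (where `fcount' K i = f_{i-1}(K)`). -/
noncomputable def hvec (K : SimplicialComplex ℝ (Spc N)) (d j : ℕ) : ℤ :=
  ∑ i ∈ Finset.range (j + 1),
    (-1 : ℤ) ^ (j - i) * ((d + 1 - i).choose (j - i) : ℤ) * fcount' K i

/-- An isomorphism between two simplicial complexes: an injection on vertices carrying the
faces of one complex exactly onto the faces of the other. -/
def IsIso (K : SimplicialComplex ℝ (Spc m)) (L : SimplicialComplex ℝ (Spc n)) : Prop :=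
  ∃ f : Spc m → Spc n, Set.InjOn f K.vertices ∧
    (∀ s ∈ K.faces, s.image f ∈ L.faces) ∧
    (∀ t ∈ L.faces, ∃ s ∈ K.faces, s.image f = t)

/-- `L` is a subdivision of `K`: same underlying polyhedron and every simplex of `L` is
contained in a simplex of `K`. -/
def IsSubdivisionOf (L K : SimplicialComplex ℝ (Spc N)) : Prop :=
  L.space = K.space ∧
    ∀ s ∈ L.faces, ∃ t ∈ K.faces,
      convexHull ℝ (s : Set (Spc N)) ⊆ convexHull ℝ (t : Set (Spc N))

/-- Two complexes are combinatorially equivalent if they have isomorphic subdivisions. -/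
def CombEquiv (K : SimplicialComplex ℝ (Spc m)) (L : SimplicialComplex ℝ (Spc n)) : Prop :=
  ∃ (K' : SimplicialComplex ℝ (Spc m)) (L' : SimplicialComplex ℝ (Spc n)),
    IsSubdivisionOf K' K ∧ IsSubdivisionOf L' L ∧ IsIso K' L'

/-- `K` is the boundary complex of a geometric `(d+1)`-simplex: its faces are exactly the proper
nonempty subsets of a set `s` of `d+2` affinely independent points (the standard `d`-sphere). -/
def IsStandardSphere (d : ℕ) (K : SimplicialComplex ℝ (Spc N)) : Prop :=
  ∃ s : Finset (Spc N), s.card = d + 2 ∧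
    AffineIndependent ℝ ((↑) : s → Spc N) ∧
    K.faces = {t | t ⊆ s ∧ t ≠ ∅ ∧ t ≠ s}

/-- A combinatorial `d`-sphere: a complex combinatorially equivalent to the boundary complex of
the `(d+1)`-simplex. -/
def IsCombSphere (d : ℕ) (K : SimplicialComplex ℝ (Spc N)) : Prop :=
  ∃ L : SimplicialComplex ℝ (Spc (d + 2)), IsStandardSphere d L ∧ CombEquiv K L

/-- The link of a simplex `σ` in `K`: all faces disjoint from `σ` whose union with `σ`
is again a face. -/
noncomputable def linkOf (K : SimplicialComplex ℝ (Spc N)) (σ : Finset (Spc N)) :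
    SimplicialComplex ℝ (Spc N) where
  faces := {s | s ∈ K.faces ∧ Disjoint s σ ∧ s ∪ σ ∈ K.faces}
  indep h := K.indep h.1
  isRelLowerSet_faces := by
    intro s hs
    refine ⟨K.nonempty_of_mem_faces hs.1, fun t hts ht => ?_⟩
    exact ⟨K.down_closed hs.1 hts ht, Finset.disjoint_of_subset_left hts hs.2.1,
      K.down_closed hs.2.2 (Finset.union_subset_union_left hts)
        (Finset.Nonempty.mono Finset.subset_union_left ht)⟩
  inter_subset_convexHull hs ht := K.inter_subset_convexHull hs.1 ht.1

/-- The link of a vertex. -/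
noncomputable def link (K : SimplicialComplex ℝ (Spc N)) (v : Spc N) :
    SimplicialComplex ℝ (Spc N) :=
  linkOf K {v}

/-- A combinatorial `d`-manifold: a nonempty finite simplicial complex in which the link of
every vertex is a combinatorial `(d-1)`-sphere. -/
def IsCombManifold (d : ℕ) (K : SimplicialComplex ℝ (Spc N)) : Prop :=
  K.faces.Finite ∧ K.faces.Nonempty ∧
    ∀ v ∈ K.vertices, IsCombSphere (d - 1) (link K v)

/-- `K` is pure of dimension `d`: every face has at most `d+1` vertices and is contained in a
face with exactly `d+1` vertices. -/
def IsPure (d : ℕ) (K : SimplicialComplex ℝ (Spc N)) : Prop :=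
  (∀ s ∈ K.faces, s.card ≤ d + 1) ∧
    ∀ s ∈ K.faces, ∃ t ∈ K.faces, t.card = d + 1 ∧ s ⊆ t

/-- A `d`-pseudomanifold: a nonempty pure `d`-dimensional complex in which every `(d-1)`-simplex
lies in exactly two facets, and any two facets are connected by a chain of facets, consecutive
ones meeting in a `(d-1)`-simplex. -/
def IsPseudomanifold (d : ℕ) (K : SimplicialComplex ℝ (Spc N)) : Prop :=
  K.faces.Nonempty ∧ IsPure d K ∧
    (∀ s ∈ K.faces, s.card = d →
      {t | t ∈ K.faces ∧ t.card = d + 1 ∧ s ⊆ t}.ncard = 2) ∧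
    ∀ s ∈ K.faces, ∀ t ∈ K.faces, s.card = d + 1 → t.card = d + 1 →
      ∃ (k : ℕ) (c : Fin (k + 1) → Finset (Spc N)), c 0 = s ∧ c (Fin.last k) = t ∧
        (∀ i, c i ∈ K.faces ∧ (c i).card = d + 1) ∧
        ∀ i : Fin k, (c i.castSucc ∩ c i.succ).card = d

/-- Connectedness of a complex: any two vertices are joined by a path of edges. -/
def ComplexConnected (K : SimplicialComplex ℝ (Spc N)) : Prop :=
  ∀ u ∈ K.vertices, ∀ w ∈ K.vertices,
    ∃ (k : ℕ) (p : Fin (k + 1) → Spc N), p 0 = u ∧ p (Fin.last k) = w ∧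
      ∀ i : Fin k, ({p i.castSucc, p i.succ} : Finset (Spc N)) ∈ K.faces

/-- A normal `d`-pseudomanifold: a `d`-pseudomanifold in which the link of every simplex of
dimension at most `d - 2` is connected. -/
def IsNormalPseudomanifold (d : ℕ) (K : SimplicialComplex ℝ (Spc N)) : Prop :=
  IsPseudomanifold d K ∧
    ∀ σ ∈ K.faces, σ.card + 1 ≤ d → ComplexConnected (linkOf K σ)

/-- `K` is `k`-neighbourly: every `k` vertices span a `(k-1)`-face. -/
def IsNeighbourly (k : ℕ) (K : SimplicialComplex ℝ (Spc N)) : Prop :=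
  ∀ s : Finset (Spc N), (s : Set (Spc N)) ⊆ K.vertices → s.card = k → s ∈ K.faces

/-- `K'` is obtained from `K` by starring the vertex `a` in the facet `σ`:
`a` is an interior point of `σ` and the facet `σ` is replaced by the cones from `a`
over the proper faces of `σ`. -/
def IsStarredFacet (K K' : SimplicialComplex ℝ (Spc N)) (σ : Finset (Spc N)) (a : Spc N) :
    Prop :=
  σ ∈ K.facets ∧ a ∈ convexHull ℝ (σ : Set (Spc N)) ∧
    (∀ τ : Finset (Spc N), τ ⊂ σ → a ∉ convexHull ℝ (τ : Set (Spc N))) ∧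
    K'.faces = (K.faces \ {σ}) ∪
      {s | ∃ τ : Finset (Spc N), τ ⊆ σ ∧ τ ≠ σ ∧ s = insert a τ}

/-- A geometric witness that a complex is a stacked `d`-sphere: a chain of complexes starting at
the boundary complex of a `(d+1)`-simplex, each obtained from the previous one by starring a new
vertex in a facet. -/
def IsStackedSphereSeq (d : ℕ) (K : SimplicialComplex ℝ (Spc N)) : Prop :=
  ∃ (k : ℕ) (c : Fin (k + 1) → SimplicialComplex ℝ (Spc N)),
    IsStandardSphere d (c 0) ∧ c (Fin.last k) = K ∧
    ∀ i : Fin k, ∃ σ a, IsStarredFacet (c i.castSucc) (c i.succ) σ a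

/-- A stacked `d`-sphere (up to isomorphism). -/
def IsStackedSphere (d : ℕ) (K : SimplicialComplex ℝ (Spc m)) : Prop :=
  ∃ (N : ℕ) (L : SimplicialComplex ℝ (Spc N)), IsStackedSphereSeq d L ∧ IsIso K L

/-- `L` is the boundary complex of the polytope `conv V`: the faces of `L` are simplices
spanning exactly the proper (exposed) faces of the polytope; in particular the polytope is
simplicial. -/
def IsBoundaryComplexOfPolytope (L : SimplicialComplex ℝ (Spc N)) (V : Finset (Spc N)) :
    Prop :=
  (∀ s ∈ L.faces, (s : Set (Spc N)) ⊆ (V : Set (Spc N)) ∧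
      IsExposed ℝ (convexHull ℝ (V : Set (Spc N))) (convexHull ℝ (s : Set (Spc N))) ∧
      convexHull ℝ (s : Set (Spc N)) ≠ convexHull ℝ (V : Set (Spc N))) ∧
    ∀ F : Set (Spc N), F.Nonempty → IsExposed ℝ (convexHull ℝ (V : Set (Spc N))) F →
      F ≠ convexHull ℝ (V : Set (Spc N)) → ∃ s ∈ L.faces, F = convexHull ℝ (s : Set (Spc N))

/-- A polytopal `d`-sphere: a complex isomorphic to the boundary complex of a simplicial
`(d+1)`-polytope (a full-dimensional polytope in `ℝ^{d+1}`). -/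
def IsPolytopalSphere (d : ℕ) (K : SimplicialComplex ℝ (Spc m)) : Prop :=
  ∃ (V : Finset (Spc (d + 1))) (L : SimplicialComplex ℝ (Spc (d + 1))),
    affineSpan ℝ (V : Set (Spc (d + 1))) = ⊤ ∧
    IsBoundaryComplexOfPolytope L V ∧ IsIso K L


/-- The edge graph of a simplicial complex. -/
def edgeGraph (K : SimplicialComplex ℝ (Spc N)) : SimpleGraph (Spc N) where
  Adj u w := u ≠ w ∧ ({u, w} : Finset (Spc N)) ∈ K.faces
  symm := ⟨fun u w h => ⟨h.1.symm, by rw [Finset.pair_comm]; exact h.2⟩⟩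
  loopless := ⟨fun u h => h.1 rfl⟩

end MinTri

/-!
Since `G` acts properly, the quotient map `f` is injective on the closed star of every vertex `v`
(two of its points are joined through `v` by a walk of length at most two), and it maps the
link of `v` isomorphically onto the link of `f v`. It remains to see that being a combinatorial
sphere is invariant under isomorphism. An isomorphism `A ≅ B` extends to the map that is affine
on every simplex; it is a bijection from the space of `A` onto that of `B`, inverted by the
extension of the inverse isomorphism, so it carries every subdivision of `A` onto an isomorphic
subdivision of `B`.
-/

section AffineInterpolation

variable {k V W : Type*} [Field k] [AddCommGroup V] [Module k V] [AddCommGroup W] [Module k W]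

theorem LinearIndependent.exists_linearMap_apply_eq {ι : Type*} {v : ι → V}
    (hv : LinearIndependent k v) (w : ι → W) : ∃ L : V →ₗ[k] W, ∀ i, L (v i) = w i := by
  obtain ⟨L, hL⟩ := LinearMap.exists_extend ((Module.Basis.span hv).constr k w)
  refine ⟨L, fun i => ?_⟩
  have h := LinearMap.congr_fun hL (Module.Basis.span hv i)
  rwa [LinearMap.comp_apply, Module.Basis.constr_basis, Submodule.subtype_apply,
    Module.Basis.span_apply] at h

theorem AffineIndependent.exists_affineMap_eqOn {s : Set V}
    (hs : AffineIndependent k ((↑) : s → V)) (g : V → W) :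
    ∃ T : V →ᵃ[k] W, Set.EqOn T g s := by
  rcases s.eq_empty_or_nonempty with rfl | ⟨p, hp⟩
  · exact ⟨AffineMap.const k V 0, fun _ h => h.elim⟩
  obtain ⟨L, hL⟩ := ((affineIndependent_iff_linearIndependent_vsub k _ ⟨p, hp⟩).1 hs
    ).exists_linearMap_apply_eq fun i => g i - g p
  refine ⟨L.toAffineMap + AffineMap.const k V (g p - L p), fun x hx => ?_⟩
  by_cases hxp : x = p
  · subst hxp
    simp
  · have hx := hL ⟨⟨x, hx⟩, fun h => hxp (congrArg Subtype.val h)⟩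
    simp only [vsub_eq_sub, map_sub] at hx
    simp only [AffineMap.coe_add, AffineMap.coe_const, LinearMap.coe_toAffineMap, Pi.add_apply,
      Function.const_apply]
    rw [add_sub, add_sub_right_comm, hx, sub_add_cancel]

end AffineInterpolation

namespace Geometry.SimplicialComplex

open Set

variable {𝕜 E F : Type*} [Field 𝕜] [PartialOrder 𝕜] [AddCommGroup E] [Module 𝕜 E]
  [AddCommGroup F] [Module 𝕜 F]
  {A : SimplicialComplex 𝕜 E} {B : SimplicialComplex 𝕜 F} {f : E → F} {g : F → E} {s : Finset E}

theorem mem_vertices_of_mem_faces (hs : s ∈ A.faces) {y : E} (hy : y ∈ s) : y ∈ A.vertices :=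
  A.down_closed hs (Finset.singleton_subset_iff.2 hy) (Finset.singleton_nonempty y)

theorem vertices_subset_image [DecidableEq F]
    (hB : B.faces ⊆ Finset.image f '' A.faces) : B.vertices ⊆ f '' A.vertices := by
  intro z hz
  obtain ⟨s, hs, hsz⟩ := hB hz
  obtain ⟨y, hy⟩ := A.nonempty_of_mem_faces hs
  exact ⟨y, mem_vertices_of_mem_faces hs hy,
    Finset.mem_singleton.1 (hsz ▸ Finset.mem_image_of_mem f hy)⟩

variable (A f) in
open Classical in
noncomputable def faceAffineMap (s : Finset E) : E →ᵃ[𝕜] F :=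
  if hs : s ∈ A.faces then (AffineIndependent.exists_affineMap_eqOn (A.indep hs) f).choose
  else AffineMap.const 𝕜 E 0

theorem faceAffineMap_eqOn (hs : s ∈ A.faces) : EqOn (A.faceAffineMap f s) f s := by
  rw [faceAffineMap, dif_pos hs]
  exact (AffineIndependent.exists_affineMap_eqOn (A.indep hs) f).choose_spec

theorem faceAffineMap_eqOn_inter {t : Finset E} (hs : s ∈ A.faces) (ht : t ∈ A.faces) :
    EqOn (A.faceAffineMap f s) (A.faceAffineMap f t) (convexHull 𝕜 ↑s ∩ convexHull 𝕜 ↑t) := by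
  intro x hx
  refine AffineMap.eqOn_affineSpan (s := ↑s ∩ ↑t) (fun y hy => ?_)
    (convexHull_subset_affineSpan _ (A.inter_subset_convexHull hs ht hx))
  rw [faceAffineMap_eqOn hs hy.1, faceAffineMap_eqOn ht hy.2]

variable (A f) in
open Classical in
noncomputable def affineExtension (x : E) : F :=
  if h : ∃ s ∈ A.faces, x ∈ convexHull 𝕜 (s : Set E) then A.faceAffineMap f h.choose x else 0

theorem affineExtension_eqOn_faceAffineMap (hs : s ∈ A.faces) :
    EqOn (A.affineExtension f) (A.faceAffineMap f s) (convexHull 𝕜 ↑s) := by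
  intro x hx
  have h : ∃ s ∈ A.faces, x ∈ convexHull 𝕜 (s : Set E) := ⟨s, hs, hx⟩
  rw [affineExtension, dif_pos h]
  exact faceAffineMap_eqOn_inter h.choose_spec.1 hs ⟨h.choose_spec.2, hx⟩

theorem affineExtension_eqOn (hs : s ∈ A.faces) : EqOn (A.affineExtension f) f s :=
  fun _ hy => (affineExtension_eqOn_faceAffineMap hs (subset_convexHull 𝕜 _ hy)).trans
    (faceAffineMap_eqOn hs hy)

theorem image_affineExtension_convexHull (hs : s ∈ A.faces) {u : Set E}
    (hu : u ⊆ convexHull 𝕜 ↑s) :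
    A.affineExtension f '' convexHull 𝕜 u = convexHull 𝕜 (A.affineExtension f '' u) := by
  have hT := affineExtension_eqOn_faceAffineMap (f := f) hs
  rw [(hT.mono (convexHull_min hu (convex_convexHull 𝕜 _))).image_eq, AffineMap.image_convexHull,
    (hT.mono hu).image_eq]

theorem image_affineExtension_convexHull_face (hs : s ∈ A.faces) :
    A.affineExtension f '' convexHull 𝕜 ↑s = convexHull 𝕜 (f '' ↑s) := by
  rw [image_affineExtension_convexHull hs (subset_convexHull 𝕜 _),
    (affineExtension_eqOn hs).image_eq]

variable [DecidableEq F]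

theorem mapsTo_affineExtension_convexHull (hs : s ∈ A.faces) :
    MapsTo (A.affineExtension f) (convexHull 𝕜 ↑s) (convexHull 𝕜 ↑(s.image f)) := by
  rw [Finset.coe_image, ← image_affineExtension_convexHull_face hs]
  exact mapsTo_image _ _

theorem image_affineExtension_space (hB : B.faces = Finset.image f '' A.faces) :
    A.affineExtension f '' A.space = B.space := by
  simp only [space, image_iUnion₂, hB, biUnion_image, Finset.coe_image]
  exact iUnion₂_congr fun s hs => image_affineExtension_convexHull_face hs

theorem leftInvOn_affineExtension (hmap : ∀ s ∈ A.faces, s.image f ∈ B.faces)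
    (hgf : LeftInvOn g f A.vertices) :
    LeftInvOn (B.affineExtension g) (A.affineExtension f) A.space := by
  intro x hx
  obtain ⟨s, hs, hxs⟩ := mem_space_iff.1 hx
  have hfs := hmap s hs
  have hid : EqOn ((B.faceAffineMap g (s.image f)).comp (A.faceAffineMap f s))
      (AffineMap.id 𝕜 E) s := by
    intro y hy
    simp only [AffineMap.coe_comp, Function.comp_apply, AffineMap.coe_id, id_eq]
    rw [faceAffineMap_eqOn hs hy, faceAffineMap_eqOn hfs (Finset.mem_image_of_mem f hy)]
    exact hgf (mem_vertices_of_mem_faces hs hy)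
  rw [affineExtension_eqOn_faceAffineMap hfs (mapsTo_affineExtension_convexHull hs hxs),
    affineExtension_eqOn_faceAffineMap hs hxs]
  exact AffineMap.eqOn_affineSpan hid (convexHull_subset_affineSpan _ hxs)


theorem affineIndependent_image_affineExtension (hmap : ∀ s ∈ A.faces, s.image f ∈ B.faces)
    (hgf : LeftInvOn g f A.vertices) (hs : s ∈ A.faces) {u : Finset E}
    (hu : (u : Set E) ⊆ convexHull 𝕜 ↑s) (hind : AffineIndependent 𝕜 ((↑) : u → E)) :
    AffineIndependent 𝕜 ((↑) : u.image (A.affineExtension f) → F) := by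
  have hcomp : B.faceAffineMap g (s.image f) ∘ (fun y : u => A.affineExtension f y) = (↑) := by
    funext y
    have hy : (y : E) ∈ convexHull 𝕜 ↑s := hu y.2
    rw [Function.comp_apply, ← affineExtension_eqOn_faceAffineMap (hmap s hs)
      (mapsTo_affineExtension_convexHull hs hy)]
    exact leftInvOn_affineExtension hmap hgf (convexHull_subset_space hs hy)
  have h := (AffineIndependent.of_comp _ (hcomp ▸ hind)).range
  rwa [show range (fun y : u => A.affineExtension f y) = ↑(u.image (A.affineExtension f)) by
    ext; simp] at h

theorem convexHull_image_inter_image_subset (hmap : ∀ s ∈ A.faces, s.image f ∈ B.faces)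
    (hgf : LeftInvOn g f A.vertices) {A₁ : SimplicialComplex 𝕜 E} {u₁ u₂ s₁ s₂ : Finset E}
    (hu₁ : u₁ ∈ A₁.faces) (hu₂ : u₂ ∈ A₁.faces) (hs₁ : s₁ ∈ A.faces) (hs₂ : s₂ ∈ A.faces)
    (hus₁ : convexHull 𝕜 (u₁ : Set E) ⊆ convexHull 𝕜 ↑s₁)
    (hus₂ : convexHull 𝕜 (u₂ : Set E) ⊆ convexHull 𝕜 ↑s₂) :
    convexHull 𝕜 ↑(u₁.image (A.affineExtension f)) ∩
        convexHull 𝕜 ↑(u₂.image (A.affineExtension f)) ⊆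
      convexHull 𝕜 ((u₁.image (A.affineExtension f) : Set F) ∩ u₂.image (A.affineExtension f)) := by
  classical
  have hinj := (leftInvOn_affineExtension hmap hgf).injOn
  rintro z ⟨hz₁, hz₂⟩
  rw [Finset.coe_image, ← image_affineExtension_convexHull hs₁
    ((subset_convexHull 𝕜 _).trans hus₁)] at hz₁
  rw [Finset.coe_image, ← image_affineExtension_convexHull hs₂
    ((subset_convexHull 𝕜 _).trans hus₂)] at hz₂
  obtain ⟨x, hx₁, rfl⟩ := hz₁
  obtain ⟨x', hx₂, hxx'⟩ := hz₂
  rw [hinj (convexHull_subset_space hs₂ (hus₂ hx₂)) (convexHull_subset_space hs₁ (hus₁ hx₁))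
    hxx'] at hx₂
  have hx : x ∈ convexHull 𝕜 ↑(u₁ ∩ u₂) := by
    rw [Finset.coe_inter]
    exact A₁.inter_subset_convexHull hu₁ hu₂ ⟨hx₁, hx₂⟩
  have hint : (↑(u₁ ∩ u₂) : Set E) ⊆ convexHull 𝕜 ↑s₁ :=
    (subset_convexHull 𝕜 _).trans ((convexHull_mono (by simp)).trans hus₁)
  have hz : A.affineExtension f x ∈ convexHull 𝕜 (A.affineExtension f '' ↑(u₁ ∩ u₂)) := by
    rw [← image_affineExtension_convexHull hs₁ hint]
    exact mem_image_of_mem _ hx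
  refine convexHull_mono ?_ hz
  rw [Finset.coe_inter, Finset.coe_image, Finset.coe_image]
  exact image_inter_subset _ _ _

theorem exists_faces_eq_image_affineExtension (hmap : ∀ s ∈ A.faces, s.image f ∈ B.faces)
    (hgf : LeftInvOn g f A.vertices) {A₁ : SimplicialComplex 𝕜 E}
    (hsub : ∀ u ∈ A₁.faces, ∃ s ∈ A.faces, convexHull 𝕜 (u : Set E) ⊆ convexHull 𝕜 ↑s) :
    ∃ B₁ : SimplicialComplex 𝕜 F, B₁.faces = Finset.image (A.affineExtension f) '' A₁.faces := by
  refine ⟨{ faces := Finset.image (A.affineExtension f) '' A₁.faces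
            isRelLowerSet_faces := ?_
            indep := ?_
            inter_subset_convexHull := ?_ }, rfl⟩
  · rintro _ ⟨u, hu, rfl⟩
    refine ⟨(A₁.nonempty_of_mem_faces hu).image _, fun t ht htne => ?_⟩
    obtain ⟨u', hu'u, rfl⟩ := Finset.subset_image_iff.1 ht
    exact ⟨u', A₁.down_closed hu hu'u (Finset.image_nonempty.1 htne), rfl⟩
  · rintro _ ⟨u, hu, rfl⟩
    obtain ⟨s, hs, hus⟩ := hsub u hu
    exact affineIndependent_image_affineExtension hmap hgf hs
      ((subset_convexHull 𝕜 _).trans hus) (A₁.indep hu)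
  · rintro _ _ ⟨u₁, hu₁, rfl⟩ ⟨u₂, hu₂, rfl⟩
    obtain ⟨s₁, hs₁, hus₁⟩ := hsub u₁ hu₁
    obtain ⟨s₂, hs₂, hus₂⟩ := hsub u₂ hu₂
    exact convexHull_image_inter_image_subset hmap hgf hu₁ hu₂ hs₁ hs₂ hus₁ hus₂

theorem space_eq_image_affineExtension {A₁ : SimplicialComplex 𝕜 E} {B₁ : SimplicialComplex 𝕜 F}
    (hsub : ∀ u ∈ A₁.faces, ∃ s ∈ A.faces, convexHull 𝕜 (u : Set E) ⊆ convexHull 𝕜 ↑s)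
    (hB₁ : B₁.faces = Finset.image (A.affineExtension f) '' A₁.faces) :
    B₁.space = A.affineExtension f '' A₁.space := by
  simp only [space, hB₁, biUnion_image, image_iUnion₂, Finset.coe_image]
  refine iUnion₂_congr fun u hu => ?_
  obtain ⟨s, hs, hus⟩ := hsub u hu
  exact (image_affineExtension_convexHull hs ((subset_convexHull 𝕜 _).trans hus)).symm

end Geometry.SimplicialComplex

namespace MinTri

open Set Function Geometry.SimplicialComplex

variable {k m n N M : ℕ}

theorem IsIso.exists_subdivision {A A₁ : SimplicialComplex ℝ (Spc m)}
    {B : SimplicialComplex ℝ (Spc n)} (hAB : IsIso A B) (hA₁ : IsSubdivisionOf A₁ A) :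
    ∃ B₁ : SimplicialComplex ℝ (Spc n), IsSubdivisionOf B₁ B ∧ IsIso A₁ B₁ := by
  obtain ⟨f, hinj, hmap, honto⟩ := hAB
  obtain ⟨hspace, hsub⟩ := hA₁
  have hgf := hinj.leftInvOn_invFunOn
  have hB : B.faces = Finset.image f '' A.faces :=
    Subset.antisymm (fun t ht => honto t ht) (image_subset_iff.2 hmap)
  obtain ⟨B₁, hB₁⟩ := exists_faces_eq_image_affineExtension hmap hgf hsub
  refine ⟨B₁, ⟨?_, ?_⟩, A.affineExtension f, ?_, fun u hu => hB₁ ▸ ⟨u, hu, rfl⟩, ?_⟩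
  · rw [space_eq_image_affineExtension hsub hB₁, hspace, image_affineExtension_space hB]
  · rw [hB₁]
    rintro _ ⟨u, hu, rfl⟩
    obtain ⟨s, hs, hus⟩ := hsub u hu
    refine ⟨s.image f, hmap s hs, ?_⟩
    rw [Finset.coe_image, Finset.coe_image, ← image_affineExtension_convexHull hs
      ((subset_convexHull ℝ _).trans hus), ← image_affineExtension_convexHull_face hs]
    exact image_mono hus
  · exact (leftInvOn_affineExtension hmap hgf).injOn.mono
      (A₁.vertices_subset_space.trans hspace.subset)
  · rw [hB₁]
    rintro _ ⟨u, hu, rfl⟩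
    exact ⟨u, hu, rfl⟩

theorem IsIso.symm {A : SimplicialComplex ℝ (Spc m)} {B : SimplicialComplex ℝ (Spc n)}
    (h : IsIso A B) : IsIso B A := by
  obtain ⟨f, hinj, hmap, honto⟩ := h
  have hgf := hinj.leftInvOn_invFunOn
  have himg : ∀ s ∈ A.faces, (s.image f).image (invFunOn f A.vertices) = s := fun s hs =>
    Finset.coe_injective <| by
      simpa using hgf.image_image' fun y hy => mem_vertices_of_mem_faces hs hy
  refine ⟨invFunOn f A.vertices,
    hgf.rightInvOn_image.injOn.mono (vertices_subset_image fun t ht => honto t ht), ?_,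
    fun s hs => ⟨_, hmap s hs, himg s hs⟩⟩
  intro t ht
  obtain ⟨s, hs, rfl⟩ := honto t ht
  rwa [himg s hs]

theorem IsIso.trans {A : SimplicialComplex ℝ (Spc m)} {B : SimplicialComplex ℝ (Spc n)}
    {C : SimplicialComplex ℝ (Spc k)} (hAB : IsIso A B) (hBC : IsIso B C) : IsIso A C := by
  obtain ⟨f, hfinj, hfmap, hfonto⟩ := hAB
  obtain ⟨g, hginj, hgmap, hgonto⟩ := hBC
  refine ⟨g ∘ f, hginj.comp hfinj fun y hy => hfmap {y} hy, fun s hs => ?_, fun t ht => ?_⟩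
  · rw [← Finset.image_image]
    exact hgmap _ (hfmap s hs)
  · obtain ⟨u, hu, rfl⟩ := hgonto t ht
    obtain ⟨s, hs, rfl⟩ := hfonto u hu
    exact ⟨s, hs, Finset.image_image.symm⟩

theorem IsCombSphere.of_isIso {e : ℕ} {A : SimplicialComplex ℝ (Spc m)}
    {B : SimplicialComplex ℝ (Spc n)} (h : IsCombSphere e A) (hAB : IsIso A B) :
    IsCombSphere e B := by
  obtain ⟨S, hS, A₁, S₁, hA₁, hS₁, hiso⟩ := h
  obtain ⟨B₁, hB₁, hAB₁⟩ := hAB.exists_subdivision hA₁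
  exact ⟨S, hS, B₁, S₁, hB₁, hS₁, hAB₁.symm.trans hiso⟩

theorem exists_walk_length_le_one {K : SimplicialComplex ℝ (Spc N)} {s : Finset (Spc N)}
    {x v : Spc N} (hs : s ∈ K.faces) (hx : x ∈ s) (hv : v ∈ s) :
    ∃ p : (edgeGraph K).Walk x v, p.length ≤ 1 := by
  by_cases hxv : x = v
  · subst hxv
    exact ⟨.nil, zero_le_one⟩
  · have hadj : (edgeGraph K).Adj x v := ⟨hxv, K.down_closed hs
      (Finset.insert_subset hx (Finset.singleton_subset_iff.2 hv)) (Finset.insert_nonempty _ _)⟩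
    exact ⟨hadj.toWalk, by simp⟩

section Quotient

variable {K : SimplicialComplex ℝ (Spc N)} {G : Subgroup (Equiv.Perm (Spc N))}
  {L : SimplicialComplex ℝ (Spc M)} {f : Spc N → Spc M} {v : Spc N}

/-- `x` and `y` are joined through `v` by a walk of length at most two, which a proper action
forbids between distinct points of an orbit. -/
theorem eq_of_map_eq_of_mem_faces
    (hProper : ∀ g ∈ G, g ≠ 1 → ∀ v ∈ K.vertices, ∀ p : (edgeGraph K).Walk v (g v), 3 ≤ p.length)
    (hOrbit : ∀ u ∈ K.vertices, ∀ w ∈ K.vertices, (f u = f w ↔ ∃ g ∈ G, g u = w))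
    {s t : Finset (Spc N)} {x y : Spc N} (hs : s ∈ K.faces) (ht : t ∈ K.faces)
    (hvs : v ∈ s) (hvt : v ∈ t) (hx : x ∈ s) (hy : y ∈ t) (hxy : f x = f y) : x = y := by
  have hxK := mem_vertices_of_mem_faces hs hx
  obtain ⟨g, hg, rfl⟩ := (hOrbit x hxK _ (mem_vertices_of_mem_faces ht hy)).1 hxy
  by_contra hne
  obtain ⟨p, hp⟩ := exists_walk_length_le_one hs hx hvs
  obtain ⟨q, hq⟩ := exists_walk_length_le_one ht hy hvt
  have h := hProper g hg (fun h => hne (by rw [h]; rfl)) x hxK (p.append q.reverse)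
  rw [SimpleGraph.Walk.length_append, SimpleGraph.Walk.length_reverse] at h
  omega

theorem exists_face_mem_image_eq
    (hAut : ∀ g ∈ G, ∀ s : Finset (Spc N), s ∈ K.faces ↔ s.image g ∈ K.faces)
    (hOrbit : ∀ u ∈ K.vertices, ∀ w ∈ K.vertices, (f u = f w ↔ ∃ g ∈ G, g u = w))
    (hQuot : L.faces = {t | ∃ s ∈ K.faces, t = s.image f}) {t : Finset (Spc M)}
    (ht : t ∈ L.faces) (hv : v ∈ K.vertices) (hvt : f v ∈ t) :
    ∃ u ∈ K.faces, v ∈ u ∧ u.image f = t := by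
  rw [hQuot] at ht
  obtain ⟨u, hu, rfl⟩ := ht
  obtain ⟨w, hw, hwv⟩ := Finset.mem_image.1 hvt
  obtain ⟨g, hg, rfl⟩ := (hOrbit w (mem_vertices_of_mem_faces hu hw) v hv).1 hwv
  refine ⟨u.image g, (hAut g hg u).1 hu, Finset.mem_image_of_mem g hw, ?_⟩
  rw [Finset.image_image]
  refine Finset.image_congr fun x hx => ?_
  have hxK := mem_vertices_of_mem_faces hu hx
  have hgxK : g x ∈ K.vertices := by
    have h := (hAut g hg {x}).1 hxK
    rwa [Finset.image_singleton] at h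
  exact ((hOrbit x hxK _ hgxK).2 ⟨g, hg, rfl⟩).symm

theorem image_mem_link
    (hProper : ∀ g ∈ G, g ≠ 1 → ∀ v ∈ K.vertices, ∀ p : (edgeGraph K).Walk v (g v), 3 ≤ p.length)
    (hOrbit : ∀ u ∈ K.vertices, ∀ w ∈ K.vertices, (f u = f w ↔ ∃ g ∈ G, g u = w))
    (hQuot : L.faces = {t | ∃ s ∈ K.faces, t = s.image f}) {s : Finset (Spc N)}
    (hs : s ∈ (link K v).faces) : s.image f ∈ (link L (f v)).faces := by
  obtain ⟨hsK, hsv, hsvK⟩ := hs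
  refine ⟨hQuot ▸ ⟨s, hsK, rfl⟩, Finset.disjoint_singleton_right.2 fun hfv => ?_, ?_⟩
  · obtain ⟨x, hx, hxv⟩ := Finset.mem_image.1 hfv
    have hxv := eq_of_map_eq_of_mem_faces (v := v) hProper hOrbit hsvK hsvK (by simp) (by simp)
      (Finset.mem_union_left _ hx) (by simp) hxv
    exact Finset.disjoint_singleton_right.1 hsv (hxv ▸ hx)
  · rw [← Finset.image_singleton, ← Finset.image_union, hQuot]
    exact ⟨s ∪ {v}, hsvK, rfl⟩

theorem exists_mem_link_image_eq
    (hAut : ∀ g ∈ G, ∀ s : Finset (Spc N), s ∈ K.faces ↔ s.image g ∈ K.faces)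
    (hProper : ∀ g ∈ G, g ≠ 1 → ∀ v ∈ K.vertices, ∀ p : (edgeGraph K).Walk v (g v), 3 ≤ p.length)
    (hOrbit : ∀ u ∈ K.vertices, ∀ w ∈ K.vertices, (f u = f w ↔ ∃ g ∈ G, g u = w))
    (hQuot : L.faces = {t | ∃ s ∈ K.faces, t = s.image f}) (hv : v ∈ K.vertices)
    {t : Finset (Spc M)} (ht : t ∈ (link L (f v)).faces) :
    ∃ s ∈ (link K v).faces, s.image f = t := by
  obtain ⟨htL, htv, htvL⟩ := ht
  obtain ⟨u, hu, hvu, hut⟩ := exists_face_mem_image_eq hAut hOrbit hQuot htvL hv (by simp)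
  have himage : (u.erase v).image f = t := by
    refine Finset.Subset.antisymm (fun z hz => ?_) (fun z hz => ?_)
    · obtain ⟨x, hx, rfl⟩ := Finset.mem_image.1 hz
      have hxu := Finset.mem_of_mem_erase hx
      rcases Finset.mem_union.1 (hut ▸ Finset.mem_image_of_mem f hxu) with hxt | hxv
      · exact hxt
      · exact absurd (eq_of_map_eq_of_mem_faces hProper hOrbit hu hu hvu hvu hxu hvu
          (Finset.mem_singleton.1 hxv)) (Finset.ne_of_mem_erase hx)
    · obtain ⟨x, hx, rfl⟩ := Finset.mem_image.1 (hut ▸ Finset.mem_union_left _ hz)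
      refine Finset.mem_image_of_mem f (Finset.mem_erase.2 ⟨?_, hx⟩)
      rintro rfl
      exact Finset.disjoint_singleton_right.1 htv hz
  have hne : (u.erase v).Nonempty := Finset.image_nonempty.1 (himage ▸ L.nonempty_of_mem_faces htL)
  refine ⟨u.erase v, ⟨K.down_closed hu (Finset.erase_subset v u) hne, by simp, ?_⟩, himage⟩
  rwa [Finset.erase_union_eq v u hvu]

theorem isIso_link
    (hAut : ∀ g ∈ G, ∀ s : Finset (Spc N), s ∈ K.faces ↔ s.image g ∈ K.faces)
    (hProper : ∀ g ∈ G, g ≠ 1 → ∀ v ∈ K.vertices, ∀ p : (edgeGraph K).Walk v (g v), 3 ≤ p.length)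
    (hOrbit : ∀ u ∈ K.vertices, ∀ w ∈ K.vertices, (f u = f w ↔ ∃ g ∈ G, g u = w))
    (hQuot : L.faces = {t | ∃ s ∈ K.faces, t = s.image f}) (hv : v ∈ K.vertices) :
    IsIso (link K v) (link L (f v)) :=
  ⟨f, fun _ hx _ hy hxy => eq_of_map_eq_of_mem_faces (v := v) hProper hOrbit hx.2.2 hy.2.2
      (by simp) (by simp) (by simp) (by simp) hxy,
    fun _ hs => image_mem_link hProper hOrbit hQuot hs,
    fun _ ht => exists_mem_link_image_eq hAut hProper hOrbit hQuot hv ht⟩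

end Quotient

/-- If a group `G` of automorphisms of (the abstract simplicial complex of) a combinatorial
`d`-manifold `K` acts properly (every vertex is moved to distance `≥ 3` in the edge graph by
every non-identity element), then any geometric realization of the quotient complex `K/G`
is again a combinatorial `d`-manifold. -/
theorem quotient_by_proper_action_isCombManifold
    {N d : ℕ} (K : SimplicialComplex ℝ (Spc N)) (hK : IsCombManifold d K)
    (G : Subgroup (Equiv.Perm (Spc N)))
    (hAut : ∀ g ∈ G, ∀ s : Finset (Spc N), s ∈ K.faces ↔ s.image g ∈ K.faces)
    (hProper : ∀ g ∈ G, g ≠ 1 → ∀ v ∈ K.vertices,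
      ∀ p : (edgeGraph K).Walk v (g v), 3 ≤ p.length)
    (M : ℕ) (L : SimplicialComplex ℝ (Spc M)) (f : Spc N → Spc M)
    (hOrbit : ∀ u ∈ K.vertices, ∀ w ∈ K.vertices, (f u = f w ↔ ∃ g ∈ G, g u = w))
    (hQuot : L.faces = {t | ∃ s ∈ K.faces, t = s.image f}) :
    IsCombManifold d L := by
  obtain ⟨hfin, ⟨s, hs⟩, hlink⟩ := hK
  have hL : L.faces = Finset.image f '' K.faces := by
    rw [hQuot]
    ext t
    simp [eq_comm]
  refine ⟨hL ▸ hfin.image _, ⟨s.image f, hL ▸ mem_image_of_mem _ hs⟩, ?_⟩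
  rintro _ hv'
  obtain ⟨v, hv, rfl⟩ := vertices_subset_image hL.subset hv'
  exact (hlink v hv).of_isIso (isIso_link hAut hProper hOrbit hQuot hv)

end MinTri
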